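/- Let n ≥ 1 be a natural number and let s > 0 be a real number. If f : ℝ² → ℝ³ is 1-Lipschitz on the square [0, s] × [0, s] and the image f([0, s] × [0, s]) contains the frontier of the box [0,1] × [0,1] × [0,n] (the boundary surface of the n × 1 × 1 tower of unit cubes), then s·√2 ≥ n; in particular s ≥ n/√2, so folding the n × 1 × 1 tower of unit cubes requires a square of side length Ω(n). -/

import Mathlib

open Set

noncomputable section

/-- The rectangle `[0,a] × [0,b]` of paper. -/
def rect (a b : ℝ) : Set (EuclideanSpace ℝ (Fin 2)) :=
  {p | 0 ≤ p 0 ∧ p 0 ≤ a ∧ 0 ≤ p 1 ∧ p 1 ≤ b}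

/-- The `n × 1 × 1` tower of unit cubes: the box `[0,1] × [0,1] × [0,n]` in `ℝ³`. -/
def tower (n : ℕ) : Set (EuclideanSpace ℝ (Fin 3)) :=
  {x | (0 ≤ x 0 ∧ x 0 ≤ 1) ∧ (0 ≤ x 1 ∧ x 1 ≤ 1) ∧ (0 ≤ x 2 ∧ x 2 ≤ (n : ℝ))}

/-!
A 1-Lipschitz map cannot increase distances. The opposite corners `0` and `n • e₂` of the
tower lie on its boundary at distance `n` (they are not interior points because the open map
`x ↦ x i` sends the tower into a closed half-line ending at their coordinate), so they are
images of two points of the square `[0,s]²`, whose distance is at most the diagonal `s√2`.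
-/

theorem IsOpenMap.mem_frontier_of_mapsTo {X Y : Type*} [TopologicalSpace X] [TopologicalSpace Y]
    {g : X → Y} (hg : IsOpenMap g) {s : Set X} {t : Set Y} (hst : MapsTo g s t) {x : X}
    (hx : x ∈ s) (hgx : g x ∉ interior t) : x ∈ frontier s := by
  refine ⟨subset_closure hx, fun hint => hgx ?_⟩
  exact interior_mono hst.image_subset (hg.image_interior_subset s (mem_image_of_mem g hint))

theorem zero_mem_frontier_tower (n : ℕ) : (0 : EuclideanSpace ℝ (Fin 3)) ∈ frontier (tower n) := by
  refine (PiLp.isOpenMap_apply 2 _ 0).mem_frontier_of_mapsTo (t := Ici 0)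
    (fun x hx => hx.1.1) (by simp [tower]) ?_
  simp

theorem single_mem_frontier_tower (n : ℕ) :
    EuclideanSpace.single 2 (n : ℝ) ∈ frontier (tower n) := by
  refine (PiLp.isOpenMap_apply 2 _ 2).mem_frontier_of_mapsTo (t := Iic (n : ℝ))
    (fun x hx => hx.2.2.2) (by simp [tower]) ?_
  simp

theorem dist_le_of_mem_rect {a b : ℝ} {x y : EuclideanSpace ℝ (Fin 2)} (hx : x ∈ rect a b)
    (hy : y ∈ rect a b) : dist x y ≤ Real.sqrt (a ^ 2 + b ^ 2) := by
  obtain ⟨hx₀, hx₀', hx₁, hx₁'⟩ := hx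
  obtain ⟨hy₀, hy₀', hy₁, hy₁'⟩ := hy
  rw [EuclideanSpace.dist_eq, Fin.sum_univ_two, Real.dist_eq, Real.dist_eq, sq_abs, sq_abs]
  exact Real.sqrt_le_sqrt (add_le_add (sq_le_sq' (by linarith) (by linarith))
    (sq_le_sq' (by linarith) (by linarith)))

theorem tower_needs_large_square_general (n : ℕ) (s : ℝ) (hs : 0 < s)
    (f : EuclideanSpace ℝ (Fin 2) → EuclideanSpace ℝ (Fin 3))
    (hlip : LipschitzOnWith 1 f (rect s s))
    (hcover : frontier (tower n) ⊆ f '' rect s s) :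
    (n : ℝ) ≤ s * Real.sqrt 2 := by
  obtain ⟨x, hx, hfx⟩ := hcover (zero_mem_frontier_tower n)
  obtain ⟨y, hy, hfy⟩ := hcover (single_mem_frontier_tower n)
  calc (n : ℝ) = dist (f x) (f y) := by
        rw [hfx, hfy, dist_zero_left, PiLp.norm_single, Real.norm_natCast]
    _ ≤ dist x y := by simpa using hlip.dist_le_mul x hx y hy
    _ ≤ Real.sqrt (s ^ 2 + s ^ 2) := dist_le_of_mem_rect hx hy
    _ = s * Real.sqrt 2 := by
        rw [← two_mul, Real.sqrt_mul zero_le_two, Real.sqrt_sq hs.le, mul_comm]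

/-- Folding the `n × 1 × 1` tower of unit cubes requires a square of side length `Ω(n)`:
if a 1-Lipschitz map of the square `[0,s]²` covers the boundary of the tower,
then `s·√2 ≥ n`. -/
theorem tower_needs_large_square (n : ℕ) (hn : 1 ≤ n) (s : ℝ) (hs : 0 < s)
    (f : EuclideanSpace ℝ (Fin 2) → EuclideanSpace ℝ (Fin 3))
    (hlip : LipschitzOnWith 1 f (rect s s))
    (hcover : frontier (tower n) ⊆ f '' rect s s) :
    (n : ℝ) ≤ s * Real.sqrt 2 :=
  tower_needs_large_square_general n s hs f hlip hcover
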